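/- arXiv:math/0504071 — 5 statements merged into one kernel-verified Lean document; each statement's English description precedes it below -/
import Mathlib

section
/- Let X be a σ-finite measure space with measure μ, H a separable Hilbert space, and γ : X → H weakly measurable. Then the kernel of the operator A_γ : H → M(X,μ) (mapping v to the equivalence class of x ↦ ⟨v, γ(x)⟩) equals the orthogonal complement of the closed linear span of the essential range of γ. -/
open MeasureTheory
open scoped InnerProductSpace

private lemma mem_orth_closure_span_iff {H : Type*} [NormedAddCommGroup H]
    [InnerProductSpace ℂ H] (S : Set H) (v : H) :
    v ∈ ((Submodule.span ℂ S).topologicalClosure)ᗮ ↔ ∀ w ∈ S, ⟪w, v⟫_ℂ = 0 := by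
  constructor
  · intro hv w hw
    exact (Submodule.mem_orthogonal _ v).1 hv w
      (Submodule.le_topologicalClosure _ (Submodule.subset_span hw))
  · intro hv
    rw [Submodule.mem_orthogonal]
    intro u hu
    have hker : (Submodule.span ℂ S).topologicalClosure ≤
        LinearMap.ker ((innerSL ℂ v : H →L[ℂ] ℂ) : H →ₗ[ℂ] ℂ) := by
      apply Submodule.topologicalClosure_minimal
      · rw [Submodule.span_le]
        intro w hw
        simp only [SetLike.mem_coe, LinearMap.mem_ker, ContinuousLinearMap.coe_coe,
          innerSL_apply_apply]
        rw [← inner_conj_symm, hv w hw, map_zero]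
      · exact ContinuousLinearMap.isClosed_ker (innerSL ℂ v)
    have : ⟪v, u⟫_ℂ = 0 := hker hu
    rw [← inner_conj_symm, this, map_zero]

/-- let `(X, μ)` be σ-finite, `H` a separable Hilbert space and
`γ : X → H` weakly measurable.  The kernel of `A_γ : H → M(X,μ)`,
`v ↦ [x ↦ ⟨v, γ x⟩] = [x ↦ ⟪γ x, v⟫_ℂ]` (i.e. the set of `v` whose image vanishes
μ-a.e.), equals the orthogonal complement of the closed linear span of the essential
range `{w : ∀ ε > 0, μ(γ⁻¹(B(w,ε))) > 0}` of `γ`. -/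
theorem ker_eval_eq_essRange_orthogonal {X : Type*} [MeasurableSpace X]
    (μ : Measure X) [SigmaFinite μ] {H : Type*} [NormedAddCommGroup H]
    [InnerProductSpace ℂ H] [TopologicalSpace.SeparableSpace H]
    (γ : X → H) (hmeas : ∀ v : H, Measurable fun x => ⟪γ x, v⟫_ℂ) (v : H) :
    (fun x => ⟪γ x, v⟫_ℂ) =ᵐ[μ] 0 ↔
      v ∈ ((Submodule.span ℂ
        {w : H | ∀ ε > 0, 0 < μ (γ ⁻¹' Metric.ball w ε)}).topologicalClosure)ᗮ := by
  rw [mem_orth_closure_span_iff]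
  constructor
  · -- a.e. zero implies orthogonal to the essential range
    intro h w hw
    by_contra hne
    set c : ℝ := ‖⟪w, v⟫_ℂ‖ with hc
    have hcpos : 0 < c := norm_pos_iff.2 hne
    set ε : ℝ := c / (‖v‖ + 1) with hε
    have hvpos : (0:ℝ) < ‖v‖ + 1 := by positivity
    have hεpos : 0 < ε := div_pos hcpos hvpos
    have hT : μ {x | ¬ ⟪γ x, v⟫_ℂ = 0} = 0 := by
      have := h
      rw [Filter.EventuallyEq, ae_iff] at this
      simpa using this
    have hpos : 0 < μ (γ ⁻¹' Metric.ball w ε \ {x | ¬ ⟪γ x, v⟫_ℂ = 0}) := by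
      by_contra hz
      push_neg at hz
      have hz0 : μ (γ ⁻¹' Metric.ball w ε \ {x | ¬ ⟪γ x, v⟫_ℂ = 0}) = 0 :=
        le_antisymm hz bot_le
      have : μ (γ ⁻¹' Metric.ball w ε) = 0 := by
        have hsub : γ ⁻¹' Metric.ball w ε ⊆
            (γ ⁻¹' Metric.ball w ε \ {x | ¬ ⟪γ x, v⟫_ℂ = 0}) ∪
            {x | ¬ ⟪γ x, v⟫_ℂ = 0} := by
          intro x hx
          by_cases hx' : ⟪γ x, v⟫_ℂ = 0
          · exact Or.inl ⟨hx, by simp [hx']⟩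
          · exact Or.inr hx'
        refine le_antisymm ?_ bot_le
        calc μ (γ ⁻¹' Metric.ball w ε) ≤
            μ ((γ ⁻¹' Metric.ball w ε \ {x | ¬ ⟪γ x, v⟫_ℂ = 0}) ∪
              {x | ¬ ⟪γ x, v⟫_ℂ = 0}) := measure_mono hsub
          _ ≤ _ + _ := measure_union_le _ _
          _ = 0 := by rw [hz0, hT, add_zero]
      exact absurd (hw ε hεpos) (by simp [this])
    obtain ⟨x, hx1, hx2⟩ := nonempty_of_measure_ne_zero hpos.ne'
    have hx0 : ⟪γ x, v⟫_ℂ = 0 := by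
      by_contra hx0
      exact hx2 hx0
    have hdist : ‖w - γ x‖ < ε := by
      have := hx1
      rw [Set.mem_preimage, Metric.mem_ball, dist_eq_norm] at this
      rwa [← norm_neg, neg_sub]
    have : c = ‖⟪w - γ x, v⟫_ℂ‖ := by
      rw [inner_sub_left, hx0, sub_zero]
    have hlt : c < c := by
      calc c = ‖⟪w - γ x, v⟫_ℂ‖ := this
        _ ≤ ‖w - γ x‖ * ‖v‖ := norm_inner_le_norm _ _
        _ ≤ ε * ‖v‖ := by
            exact mul_le_mul_of_nonneg_right hdist.le (norm_nonneg _)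
        _ < ε * (‖v‖ + 1) := by
            exact mul_lt_mul_of_pos_left (lt_add_one _) hεpos
        _ = c := by rw [hε, div_mul_cancel₀ _ hvpos.ne']
    exact absurd hlt (lt_irrefl c)
  · -- orthogonal to the essential range implies a.e. zero
    intro hv
    haveI : SecondCountableTopology H :=
      UniformSpace.secondCountable_of_separable H
    set U : Set H := {u | ⟪u, v⟫_ℂ ≠ 0} with hU
    -- every point of U has a ball of measure zero around it
    have key : ∀ u : U, ∃ ε > 0, μ (γ ⁻¹' Metric.ball (u : H) ε) = 0 := by
      rintro ⟨u, hu⟩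
      have hu' : ¬ ∀ ε > 0, 0 < μ (γ ⁻¹' Metric.ball u ε) := fun h => hu (hv u h)
      push_neg at hu'
      obtain ⟨ε, hε, hμ⟩ := hu'
      exact ⟨ε, hε, le_antisymm hμ bot_le⟩
    choose ε hεpos hεnull using key
    have hcover : U ⊆ ⋃ u : U, Metric.ball (u : H) (ε u) := by
      intro u hu
      exact Set.mem_iUnion.2 ⟨⟨u, hu⟩, Metric.mem_ball_self (hεpos ⟨u, hu⟩)⟩
    obtain ⟨T, hTc, hTU⟩ := TopologicalSpace.isOpen_iUnion_countable
      (fun u : U => Metric.ball (u : H) (ε u)) (fun _ => Metric.isOpen_ball)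
    have hnull : μ (γ ⁻¹' U) = 0 := by
      refine measure_mono_null ?_ ((measure_biUnion_null_iff hTc).2
        (fun u _ => hεnull u) : μ (⋃ u ∈ T, γ ⁻¹' Metric.ball (u : H) (ε u)) = 0)
      intro x hx
      have : γ x ∈ ⋃ u ∈ T, Metric.ball (u : H) (ε u) := by
        rw [hTU]; exact hcover hx
      simpa using this
    rw [Filter.EventuallyEq, ae_iff]
    simpa [hU] using hnull
end

section
/- Let X, Y be σ-finite measure spaces with L²(Y,ν) separable, and let γ : X → L²(Y,ν) be weakly measurable. Then there exists a jointly measurable function K : X × Y → ℂ and a μ-null set N ⊆ X such that for every x ∉ N, γ(x)(y) = conj(K(x,y)) for ν-almost all y; consequently the operator A_γ is the integral operator with kernel K. -/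
open MeasureTheory Filter Topology
open scoped InnerProductSpace ENNReal

lemma aux_norm_eq_iSup {E : Type*} [NormedAddCommGroup E] [InnerProductSpace ℂ E]
    {e : ℕ → E} (he : DenseRange e) (u : E) :
    ‖u‖ = ⨆ i, (⟪u, e i⟫_ℂ).re / ‖e i‖ := by
  have hub : ∀ i, (⟪u, e i⟫_ℂ).re / ‖e i‖ ≤ ‖u‖ := by
    intro i
    rcases eq_or_lt_of_le (norm_nonneg (e i)) with h | h
    · simp [← h]
    · rw [div_le_iff₀ h]
      calc (⟪u, e i⟫_ℂ).re ≤ ‖⟪u, e i⟫_ℂ‖ := Complex.re_le_norm _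
        _ ≤ ‖u‖ * ‖e i‖ := norm_inner_le_norm _ _
  have hbdd : BddAbove (Set.range fun i => (⟪u, e i⟫_ℂ).re / ‖e i‖) := by
    refine ⟨‖u‖, ?_⟩
    rintro _ ⟨i, rfl⟩
    exact hub i
  refine le_antisymm ?_ (ciSup_le hub)
  refine le_of_forall_pos_le_add fun ε hε => ?_
  by_cases hu : u = 0
  · subst hu
    have h0 : (0:ℝ) ≤ ⨆ i, (⟪(0:E), e i⟫_ℂ).re / ‖e i‖ := by
      have := le_ciSup hbdd 0
      simpa using this
    simp only [norm_zero]
    linarith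
  · have hupos : 0 < ‖u‖ := norm_pos_iff.mpr hu
    set δ := min (ε/2) (‖u‖/2) with hδdef
    have hδpos : 0 < δ := lt_min (by linarith) (by linarith)
    have hδε : 2*δ ≤ ε := by
      have := min_le_left (ε/2) (‖u‖/2); linarith
    have hδu : 2*δ ≤ ‖u‖ := by
      have := min_le_right (ε/2) (‖u‖/2); linarith
    obtain ⟨i, hi⟩ := he.exists_dist_lt u hδpos
    rw [dist_eq_norm] at hi
    have h1 : ‖u‖ - δ ≤ ‖e i‖ := by
      have := norm_sub_norm_le u (e i); linarith
    have h2 : ‖e i‖ ≤ ‖u‖ + δ := by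
      have : ‖e i‖ - ‖u‖ ≤ ‖u - e i‖ := by
        have := norm_sub_norm_le (e i) u
        rwa [norm_sub_rev] at this
      linarith
    have hpos : 0 < ‖e i‖ := by linarith
    have hre : ‖u‖^2 - δ*‖u‖ ≤ (⟪u, e i⟫_ℂ).re := by
      have hsplit : ⟪u, e i⟫_ℂ = ⟪u, u⟫_ℂ - ⟪u, u - e i⟫_ℂ := by
        rw [← inner_sub_right, sub_sub_cancel]
      have hself : (⟪u, u⟫_ℂ).re = ‖u‖^2 := by
        rw [← RCLike.re_to_complex]; exact inner_self_eq_norm_sq u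
      have hb : (⟪u, u - e i⟫_ℂ).re ≤ δ * ‖u‖ := by
        calc (⟪u, u - e i⟫_ℂ).re ≤ ‖⟪u, u - e i⟫_ℂ‖ := Complex.re_le_norm _
          _ ≤ ‖u‖ * ‖u - e i‖ := norm_inner_le_norm _ _
          _ ≤ ‖u‖ * δ := by nlinarith
          _ = δ * ‖u‖ := by ring
      rw [hsplit, Complex.sub_re, hself]
      linarith
    have hterm : ‖u‖ - 2*δ ≤ (⟪u, e i⟫_ℂ).re / ‖e i‖ := by
      rw [le_div_iff₀ hpos]
      nlinarith
    have := le_ciSup hbdd i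
    linarith

/-- let `(X,μ)`, `(Y,ν)` be σ-finite with `L²(Y,ν)` separable and
`γ : X → L²(Y,ν)` weakly measurable.  Then there are a jointly measurable
`K : X × Y → ℂ` and a μ-null set `N ⊆ X` such that for `x ∉ N` one has
`γ x (y) = conj (K x y)` for ν-a.e. `y`; consequently `A_γ` is the integral operator
with kernel `K`:  `(A_γ v)(x) = ⟨v, γ x⟩ = ⟪γ x, v⟫_ℂ = ∫ K(x,y) v(y) dν(y)` for `x ∉ N`. -/
theorem exists_kernel_of_weaklyMeasurable {X Y : Type*} [MeasurableSpace X]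
    [MeasurableSpace Y] (μ : Measure X) (ν : Measure Y) [SigmaFinite μ] [SigmaFinite ν]
    [TopologicalSpace.SeparableSpace (Lp ℂ 2 ν)]
    (γ : X → Lp ℂ 2 ν)
    (hmeas : ∀ v : Lp ℂ 2 ν, Measurable fun x => ⟪γ x, v⟫_ℂ) :
    ∃ (K : X → Y → ℂ) (N : Set X),
      Measurable (Function.uncurry K) ∧ μ N = 0 ∧
      (∀ x ∉ N, ∀ᵐ y ∂ν, (γ x : Y → ℂ) y = (starRingEnd ℂ) (K x y)) ∧
      (∀ (v : Lp ℂ 2 ν), ∀ x ∉ N, ⟪γ x, v⟫_ℂ = ∫ y, K x y * (v : Y → ℂ) y ∂ν) := by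
  classical
  have hne : Nonempty (Lp ℂ 2 ν) := ⟨0⟩
  set e : ℕ → Lp ℂ 2 ν := TopologicalSpace.denseSeq _ with he_def
  have he : DenseRange e := TopologicalSpace.denseRange_denseSeq _
  -- Pettis-style: distances to points are measurable
  have hdist : ∀ c : Lp ℂ 2 ν, Measurable fun x => ‖γ x - c‖ := by
    intro c
    have heq : (fun x => ‖γ x - c‖)
        = fun x => ⨆ i, (⟪γ x, e i⟫_ℂ - ⟪c, e i⟫_ℂ).re / ‖e i‖ := by
      funext x
      rw [aux_norm_eq_iSup he (γ x - c)]
      simp only [inner_sub_left]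
    rw [heq]
    refine Measurable.iSup fun i => Measurable.div_const ?_ _
    exact Complex.measurable_re.comp ((hmeas (e i)).sub_const _)
  -- measurable choice of approximating indices
  have hex : ∀ (k : ℕ) (x : X), ∃ i, ‖γ x - e i‖ < (1/2 : ℝ) ^ k := by
    intro k x
    obtain ⟨i, hi⟩ := he.exists_dist_lt (γ x) (pow_pos (by norm_num : (0:ℝ) < 1/2) k)
    exact ⟨i, by rwa [dist_eq_norm] at hi⟩
  set f : ℕ → X → ℕ := fun k x => Nat.find (hex k x) with hf_def
  have hf : ∀ k, Measurable (f k) := by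
    intro k
    refine measurable_find _ fun i => ?_
    exact (hdist (e i)) measurableSet_Iio
  -- approximating kernels
  set Kk : ℕ → X × Y → ℂ := fun k p => (starRingEnd ℂ) ((e (f k p.1) : Y → ℂ) p.2) with hKk_def
  have hKk : ∀ k, Measurable (Kk k) := by
    intro k
    have hH : Measurable (fun q : Y × ℕ => (e q.2 : Y → ℂ) q.1) :=
      measurable_from_prod_countable_left fun i => (Lp.stronglyMeasurable (e i)).measurable
    have : Measurable fun p : X × Y => (e (f k p.1) : Y → ℂ) p.2 :=
      hH.comp (measurable_snd.prodMk ((hf k).comp measurable_fst))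
    exact Complex.continuous_conj.measurable.comp this
  -- pointwise a.e. convergence for every x
  have key : ∀ x, ∀ᵐ y ∂ν, Tendsto (fun k => Kk k (x, y)) atTop
      (𝓝 ((starRingEnd ℂ) ((γ x : Y → ℂ) y))) := by
    intro x
    set w : ℕ → Lp ℂ 2 ν := fun k => e (f k x) - γ x with hw_def
    have hw : ∀ k, ‖w k‖ < (1/2 : ℝ) ^ k := by
      intro k
      have := Nat.find_spec (hex k x)
      rwa [norm_sub_rev] at this
    have hwE : ∀ k, eLpNorm (w k : Y → ℂ) 2 ν ≤ ENNReal.ofReal ((1/2 : ℝ) ^ k) := by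
      intro k
      rw [ENNReal.le_ofReal_iff_toReal_le (Lp.eLpNorm_ne_top _)
        (le_of_lt (pow_pos (by norm_num) k))]
      rw [← Lp.norm_def]
      exact (hw k).le
    -- sum of squares of L2 norms is finite
    have hmeasw : ∀ k, Measurable fun y => ((‖(w k : Y → ℂ) y‖₊ : ℝ≥0∞)) ^ (2:ℕ) :=
      fun k => ((Lp.stronglyMeasurable (w k)).measurable.nnnorm.coe_nnreal_ennreal).pow_const _
    have hsum : ∫⁻ y, ∑' k, ((‖(w k : Y → ℂ) y‖₊ : ℝ≥0∞)) ^ (2:ℕ) ∂ν < ⊤ := by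
      rw [lintegral_tsum fun k => (hmeasw k).aemeasurable]
      have hterm : ∀ k, ∫⁻ y, ((‖(w k : Y → ℂ) y‖₊ : ℝ≥0∞)) ^ (2:ℕ) ∂ν
          ≤ (ENNReal.ofReal (1/2) * ENNReal.ofReal (1/2)) ^ k := by
        intro k
        have h2 : ∫⁻ y, ((‖(w k : Y → ℂ) y‖₊ : ℝ≥0∞)) ^ (2:ℕ) ∂ν
            = (eLpNorm (w k : Y → ℂ) 2 ν) ^ (2:ℕ) := by
          rw [eLpNorm_eq_lintegral_rpow_enorm_toReal (by norm_num) (by norm_num)]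
          rw [← ENNReal.rpow_natCast _ 2, ← ENNReal.rpow_mul]
          norm_num
          rfl
        rw [h2]
        calc (eLpNorm (w k : Y → ℂ) 2 ν) ^ (2:ℕ)
            ≤ (ENNReal.ofReal ((1/2 : ℝ) ^ k)) ^ (2:ℕ) := pow_le_pow_left' (hwE k) _
          _ = (ENNReal.ofReal (1/2) * ENNReal.ofReal (1/2)) ^ k := by
              rw [ENNReal.ofReal_pow (by norm_num)]
              ring
      calc ∑' k, ∫⁻ y, ((‖(w k : Y → ℂ) y‖₊ : ℝ≥0∞)) ^ (2:ℕ) ∂ν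
          ≤ ∑' k, (ENNReal.ofReal (1/2) * ENNReal.ofReal (1/2)) ^ k :=
            ENNReal.tsum_le_tsum hterm
        _ = (1 - ENNReal.ofReal (1/2) * ENNReal.ofReal (1/2))⁻¹ := ENNReal.tsum_geometric _
        _ < ⊤ := by
            rw [← ENNReal.ofReal_mul (by norm_num)]
            rw [ENNReal.inv_lt_top, tsub_pos_iff_lt]
            exact ENNReal.ofReal_lt_one.mpr (by norm_num)
    have hae1 : ∀ᵐ y ∂ν, ∑' k, ((‖(w k : Y → ℂ) y‖₊ : ℝ≥0∞)) ^ (2:ℕ) < ⊤ :=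
      ae_lt_top (Measurable.ennreal_tsum hmeasw) hsum.ne
    have hcoe : ∀ᵐ y ∂ν, ∀ k, (w k : Y → ℂ) y = (e (f k x) : Y → ℂ) y - (γ x : Y → ℂ) y := by
      rw [ae_all_iff]
      intro k
      exact Lp.coeFn_sub (e (f k x)) (γ x)
    filter_upwards [hae1, hcoe] with y h1 h2
    -- from summability, terms tend to zero
    have h3 : Tendsto (fun k => ((‖(w k : Y → ℂ) y‖₊ : ℝ≥0∞)) ^ (2:ℕ)) atTop (𝓝 0) :=
      ENNReal.tendsto_atTop_zero_of_tsum_ne_top h1.ne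
    have h4 : Tendsto (fun k => (‖(w k : Y → ℂ) y‖₊ : ℝ≥0∞)) atTop (𝓝 0) := by
      have hc : Continuous fun z : ℝ≥0∞ => z ^ ((2:ℝ)⁻¹) :=
        ENNReal.continuous_rpow_const
      have := (hc.tendsto 0).comp h3
      simp only [Function.comp_def] at this
      rw [ENNReal.zero_rpow_of_pos (by norm_num)] at this
      convert this using 2 with k
      rw [← ENNReal.rpow_natCast _ 2, ← ENNReal.rpow_mul]
      norm_num
    have h5 : Tendsto (fun k => ‖(w k : Y → ℂ) y‖₊) atTop (𝓝 0) := by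
      rw [← ENNReal.coe_zero] at h4
      exact (ENNReal.tendsto_coe).mp h4
    have h6 : Tendsto (fun k => (w k : Y → ℂ) y) atTop (𝓝 0) := by
      rw [tendsto_zero_iff_norm_tendsto_zero]
      exact (NNReal.continuous_coe.tendsto 0).comp h5
    have h7 : Tendsto (fun k => (e (f k x) : Y → ℂ) y) atTop (𝓝 ((γ x : Y → ℂ) y)) := by
      have := h6.congr fun k => (h2 k)
      simpa using this.add_const ((γ x : Y → ℂ) y)
    exact (Complex.continuous_conj.tendsto _).comp h7
  -- jointly measurable limit
  have hae : ∀ᵐ p ∂(μ.prod ν), ∃ c, Tendsto (fun k => Kk k p) atTop (𝓝 c) := by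
    have hT : MeasurableSet {p : X × Y | ∃ c, Tendsto (fun k => Kk k p) atTop (𝓝 c)} :=
      measurableSet_exists_tendsto hKk
    rw [Measure.ae_prod_iff_ae_ae hT]
    exact Eventually.of_forall fun x => (key x).mono fun y hy => ⟨_, hy⟩
  obtain ⟨K', hK'meas, hK'tendsto⟩ :=
    measurable_limit_of_tendsto_metrizable_ae (fun k => (hKk k).aemeasurable) hae
  have hK'' : ∀ᵐ x ∂μ, ∀ᵐ y ∂ν, Tendsto (fun k => Kk k (x, y)) atTop (𝓝 (K' (x, y))) :=
    Measure.ae_ae_of_ae_prod hK'tendsto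
  set N : Set X := {x | ¬ ∀ᵐ y ∂ν, Tendsto (fun k => Kk k (x, y)) atTop (𝓝 (K' (x, y)))}
    with hN_def
  have hN : μ N = 0 := hK''
  have hmain : ∀ x ∉ N, ∀ᵐ y ∂ν, (γ x : Y → ℂ) y = (starRingEnd ℂ) (K' (x, y)) := by
    intro x hx
    have hx' : ∀ᵐ y ∂ν, Tendsto (fun k => Kk k (x, y)) atTop (𝓝 (K' (x, y))) := by
      simpa [hN_def] using hx
    filter_upwards [hx', key x] with y h1 h2
    have := tendsto_nhds_unique h2 h1
    rw [← this, Complex.conj_conj]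
  refine ⟨fun x y => K' (x, y), N, ?_, hN, hmain, ?_⟩
  · have huncurry : Function.uncurry (fun x y => K' (x, y)) = K' := by
      ext ⟨x, y⟩; rfl
    rw [huncurry]; exact hK'meas
  · intro v x hx
    rw [L2.inner_def]
    refine integral_congr_ae ?_
    filter_upwards [hmain x hx] with y hy
    rw [RCLike.inner_apply, hy]
    simp
    ring
end

section
/- Let (X,μ) be a σ-finite measure space, H a Hilbert space, and γ : X → H weakly integrable (p = 1) with separable span. Then the operator A_γ : H → L¹(X,μ), v ↦ ⟨v, γ(·)⟩, is compact. -/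
open MeasureTheory
open scoped InnerProductSpace ENNReal

/-!
Write `γ = (γ - γ₁) + γ₁`, where `γ₁ = d ∘ n` takes countably many values and
`‖γ x - γ₁ x‖ ≤ r x` for a positive integrable weight `r` of small integral (σ-finiteness).
`γ₁` comes from a dense sequence `d` of the separable span; the first admissible index `n x` is
measurable because, in a separable subspace, norms are countable suprema of inner products.
Then `‖A_γ - A_γ₁‖ ≤ ∫ r`. The norm of `A_γ₁ v` is the `ℓ¹`-norm of `(μ(n⁻¹{k}) ⟪d k, v⟫)ₖ`, and
a bounded map from a Hilbert space into `ℓ¹` has uniformly small tails (choosing signs by the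
parallelogram law, disjoint blocks add up in norm like an `ℓ²` sum), so `A_γ₁` is a norm limit
of finite-rank truncations. Compact operators form a closed set, so `A_γ` is compact.
-/

open Filter Topology RCLike ComplexConjugate

theorem Finset.sum_range_sum_Ico_of_monotone {M : Type*} [AddCommMonoid M] {N : ℕ → ℕ}
    (hN : Monotone N) (g : ℕ → M) (m : ℕ) :
    ∑ j ∈ range m, ∑ n ∈ Ico (N j) (N (j + 1)), g n = ∑ n ∈ Ico (N 0) (N m), g n := by
  induction m with
  | zero => simp
  | succ m ih =>
    rw [sum_range_succ, ih, sum_Ico_consecutive _ (hN m.zero_le) (hN m.le_succ)]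

theorem ContinuousLinearMap.isCompactOperator_of_forall_exists_norm_sub_le {𝕜 E F : Type*}
    [NontriviallyNormedField 𝕜] [NormedAddCommGroup E] [NormedSpace 𝕜 E] [NormedAddCommGroup F]
    [NormedSpace 𝕜 F] [CompleteSpace F] (T : E →L[𝕜] F)
    (h : ∀ δ > 0, ∃ S : E →L[𝕜] F, IsCompactOperator S ∧ ‖T - S‖ ≤ δ) :
    IsCompactOperator T := by
  refine isClosed_setOfPred_isCompactOperator.closure_subset
    (Metric.mem_closure_iff.mpr fun ε hε => ?_)
  obtain ⟨S, hS, hTS⟩ := h (ε / 2) (half_pos hε)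
  exact ⟨S, hS, by rw [dist_eq_norm]; linarith⟩

section

open Finset

variable {𝕜 H : Type*} [RCLike 𝕜] [NormedAddCommGroup H] [InnerProductSpace 𝕜 H]

theorem norm_le_iff_forall_two_mul_re_inner_le {s : Set H} {u : H} (hu : u ∈ closure s)
    {t : ℝ} (ht : 0 ≤ t) : ‖u‖ ≤ t ↔ ∀ y ∈ s, 2 * re ⟪u, y⟫_𝕜 ≤ ‖y‖ ^ 2 + t ^ 2 := by
  constructor
  · intro h y _
    have := re_inner_le_norm (𝕜 := 𝕜) u y
    nlinarith [norm_nonneg u, norm_nonneg y, sq_nonneg (‖u‖ - ‖y‖)]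
  · intro h
    have hclosed : IsClosed {y : H | 2 * re ⟪u, y⟫_𝕜 - ‖y‖ ^ 2 ≤ t ^ 2} :=
      isClosed_le (by fun_prop) continuous_const
    have hu' := closure_minimal (fun y hy => by simp only [Set.mem_ofPred_eq]; linarith [h y hy])
      hclosed hu
    simp only [Set.mem_ofPred_eq, inner_self_eq_norm_sq] at hu'
    exact (pow_le_pow_iff_left₀ (norm_nonneg u) ht two_ne_zero).mp (by linarith)

theorem exists_norm_eq_one_norm_sq_add_le (a b : H) :
    ∃ σ : 𝕜, ‖σ‖ = 1 ∧ ‖a‖ ^ 2 + ‖b‖ ^ 2 ≤ ‖a + σ • b‖ ^ 2 := by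
  have := parallelogram_law_with_norm 𝕜 a b
  by_cases h : ‖a‖ ^ 2 + ‖b‖ ^ 2 ≤ ‖a + b‖ ^ 2
  · exact ⟨1, norm_one, by rwa [one_smul]⟩
  · refine ⟨-1, by simp, ?_⟩
    rw [neg_smul, one_smul, ← sub_eq_add_neg]
    nlinarith

theorem exists_norm_eq_one_sum_norm_sq_le (u : ℕ → H) (m : ℕ) :
    ∃ s : ℕ → 𝕜, (∀ j, ‖s j‖ = 1) ∧
      ∑ j ∈ range m, ‖u j‖ ^ 2 ≤ ‖∑ j ∈ range m, s j • u j‖ ^ 2 := by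
  induction m with
  | zero => exact ⟨fun _ => 1, fun _ => norm_one, by simp⟩
  | succ m ih =>
    obtain ⟨s, hs, hle⟩ := ih
    obtain ⟨σ, hσ, hσle⟩ :=
      exists_norm_eq_one_norm_sq_add_le (𝕜 := 𝕜) (∑ j ∈ range m, s j • u j) (u m)
    refine ⟨Function.update s m σ, fun j => ?_, ?_⟩
    · rcases eq_or_ne j m with rfl | hj
      · rwa [Function.update_self]
      · rw [Function.update_of_ne hj, hs]
    · have hsum : ∑ j ∈ range m, Function.update s m σ j • u j = ∑ j ∈ range m, s j • u j :=
        sum_congr rfl fun j hj => by rw [Function.update_of_ne (mem_range.mp hj).ne]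
      rw [sum_range_succ, sum_range_succ, hsum, Function.update_self]
      linarith

theorem exists_norm_le_one_inner_sum_smul_eq {ι : Type*} (F : Finset ι) (x : ι → H) (v : H) :
    ∃ a : ι → 𝕜, (∀ i, ‖a i‖ ≤ 1) ∧
      ⟪∑ i ∈ F, a i • x i, v⟫_𝕜 = ∑ i ∈ F, (‖⟪x i, v⟫_𝕜‖ : 𝕜) := by
  refine ⟨fun i => ⟪x i, v⟫_𝕜 / ‖⟪x i, v⟫_𝕜‖, fun i => ?_, ?_⟩
  · rw [norm_div, norm_ofReal, abs_norm]
    exact div_self_le_one _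
  · rw [sum_inner]
    refine sum_congr rfl fun i _ => ?_
    rw [inner_smul_left, map_div₀, conj_ofReal, div_mul_eq_mul_div, RCLike.conj_mul, sq,
      mul_div_assoc]
    rcases eq_or_ne (‖⟪x i, v⟫_𝕜‖ : 𝕜) 0 with h | h
    · rw [h, zero_mul]
    · rw [div_self h, mul_one]

theorem norm_sq_le_sum_norm_inner {ι : Type*} {F : Finset ι} {a : ι → 𝕜}
    (ha : ∀ i ∈ F, ‖a i‖ ≤ 1) (x : ι → H) :
    ‖∑ i ∈ F, a i • x i‖ ^ 2 ≤ ∑ i ∈ F, ‖⟪x i, ∑ j ∈ F, a j • x j⟫_𝕜‖ := by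
  set u := ∑ j ∈ F, a j • x j
  calc ‖u‖ ^ 2 = re ⟪u, u⟫_𝕜 := (inner_self_eq_norm_sq u).symm
    _ ≤ ‖⟪u, u⟫_𝕜‖ := re_le_norm _
    _ = ‖∑ i ∈ F, conj (a i) * ⟪x i, u⟫_𝕜‖ := by
        simp only [u, sum_inner, inner_smul_left]
    _ ≤ ∑ i ∈ F, ‖⟪x i, u⟫_𝕜‖ := by
        refine (norm_sum_le _ _).trans (sum_le_sum fun i hi => ?_)
        rw [norm_mul, RCLike.norm_conj]
        exact mul_le_of_le_one_left (norm_nonneg _) (ha i hi)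

theorem sum_norm_sq_sum_Ico_smul_le {w : ℕ → H} {C : ℝ}
    (hC : ∀ v M, ∑ n ∈ range M, ‖⟪w n, v⟫_𝕜‖ ≤ C * ‖v‖) {N : ℕ → ℕ} (hN : Monotone N)
    {a : ℕ → ℕ → 𝕜} (ha : ∀ j n, ‖a j n‖ ≤ 1) (m : ℕ) :
    ∑ j ∈ range m, ‖∑ n ∈ Ico (N j) (N (j + 1)), a j n • w n‖ ^ 2 ≤ C ^ 2 := by
  set u : ℕ → H := fun j => ∑ n ∈ Ico (N j) (N (j + 1)), a j n • w n
  obtain ⟨s, hs, hsu⟩ := exists_norm_eq_one_sum_norm_sq_le (𝕜 := 𝕜) u m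
  set U := ∑ j ∈ range m, s j • u j
  have hU : U = ∑ p ∈ (range m).sigma fun j => Ico (N j) (N (j + 1)),
      (s p.1 * a p.1 p.2) • w p.2 := by
    simp only [U, u, sum_sigma, smul_sum, mul_smul]
  have hUC : ‖U‖ ^ 2 ≤ C * ‖U‖ := by
    calc ‖U‖ ^ 2 ≤ ∑ p ∈ (range m).sigma fun j => Ico (N j) (N (j + 1)), ‖⟪w p.2, U⟫_𝕜‖ := by
          conv_lhs => rw [hU]
          conv_rhs => rw [hU]
          refine norm_sq_le_sum_norm_inner (fun p _ => ?_) _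
          rw [norm_mul, hs, one_mul]
          exact ha _ _
      _ = ∑ n ∈ Ico (N 0) (N m), ‖⟪w n, U⟫_𝕜‖ := by
          rw [sum_sigma, sum_range_sum_Ico_of_monotone hN (fun n => ‖⟪w n, U⟫_𝕜‖)]
      _ ≤ ∑ n ∈ range (N m), ‖⟪w n, U⟫_𝕜‖ := by
          rw [range_eq_Ico]
          exact sum_le_sum_of_subset_of_nonneg (Ico_subset_Ico (N 0).zero_le le_rfl)
            fun _ _ _ => norm_nonneg _
      _ ≤ C * ‖U‖ := hC U _
  have := norm_nonneg U
  calc ∑ j ∈ range m, ‖u j‖ ^ 2 ≤ ‖U‖ ^ 2 := hsu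
    _ ≤ C ^ 2 := by nlinarith

theorem exists_sum_Ico_norm_inner_le {w : ℕ → H} {C : ℝ}
    (hC : ∀ v M, ∑ n ∈ range M, ‖⟪w n, v⟫_𝕜‖ ≤ C * ‖v‖) {δ : ℝ} (hδ : 0 < δ) :
    ∃ N, ∀ v M, ∑ n ∈ Ico N M, ‖⟪w n, v⟫_𝕜‖ ≤ δ * ‖v‖ := by
  -- Otherwise some `v j` see mass `> δ ‖v j‖` on consecutive blocks of indices, so the phased
  -- block sums `u j` have norm `> δ`, and `m δ² < ∑ ‖u j‖² ≤ C²` for every `m`.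
  by_contra! hbad
  choose v M hvM using hbad
  set N : ℕ → ℕ := fun j => M^[j] 0
  have hNsucc : ∀ j, N (j + 1) = M (N j) := fun j => Function.iterate_succ_apply' M j 0
  have hNmono : Monotone N := by
    refine monotone_nat_of_le_succ fun j => ?_
    by_contra! hlt
    have := hvM (N j)
    rw [← hNsucc, Ico_eq_empty_of_le hlt.le, sum_empty] at this
    nlinarith [norm_nonneg (v (N j))]
  choose a ha hau using fun j =>
    exists_norm_le_one_inner_sum_smul_eq (𝕜 := 𝕜) (Ico (N j) (N (j + 1))) w (v (N j))
  set u : ℕ → H := fun j => ∑ n ∈ Ico (N j) (N (j + 1)), a j n • w n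
  have hu : ∀ j, δ < ‖u j‖ := by
    intro j
    refine lt_of_mul_lt_mul_right ?_ (norm_nonneg (v (N j)))
    calc δ * ‖v (N j)‖ < ∑ n ∈ Ico (N j) (N (j + 1)), ‖⟪w n, v (N j)⟫_𝕜‖ := by
          rw [hNsucc]; exact hvM (N j)
      _ = re ⟪u j, v (N j)⟫_𝕜 := by simp only [u, hau, map_sum, ofReal_re]
      _ ≤ ‖u j‖ * ‖v (N j)‖ := re_inner_le_norm _ _
  obtain ⟨m, hm⟩ := exists_nat_gt (C ^ 2 / δ ^ 2)
  rw [div_lt_iff₀ (by positivity)] at hm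
  have hlower : m * δ ^ 2 ≤ ∑ j ∈ range m, ‖u j‖ ^ 2 := by
    calc m * δ ^ 2 = ∑ j ∈ range m, δ ^ 2 := by simp
      _ ≤ ∑ j ∈ range m, ‖u j‖ ^ 2 := sum_le_sum fun j _ => by
          have := hu j; gcongr
  have := sum_norm_sq_sum_Ico_smul_le hC hNmono ha m
  linarith

namespace MeasureTheory

variable {X : Type*} [MeasurableSpace X] {μ : Measure X}

theorem hasSum_integral_comp_of_countable {E ι : Type*} [NormedAddCommGroup E] [NormedSpace ℝ E]
    [CompleteSpace E] [Countable ι] [MeasurableSpace ι] [MeasurableSingletonClass ι]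
    {n : X → ι} (hn : Measurable n) {g : ι → E} (hg : Integrable (fun x => g (n x)) μ) :
    HasSum (fun k => μ.real (n ⁻¹' {k}) • g k) (∫ x, g (n x) ∂μ) := by
  have hfib : ∀ k, MeasurableSet (n ⁻¹' {k}) := fun k => hn (measurableSet_singleton k)
  have := hasSum_integral_iUnion hfib (pairwise_disjoint_fiber n) hg.integrableOn
  rw [← Set.preimage_iUnion, Set.iUnion_singleton_eq_range, Set.range_id', Set.preimage_univ,
    Measure.restrict_univ] at this
  refine this.congr_fun fun k => ?_
  rw [setIntegral_congr_fun (hfib k) (g := fun _ => g k) fun x hx => by rw [hx],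
    setIntegral_const]

theorem exists_pos_integrable_integral_le (μ : Measure X) [SigmaFinite μ] {δ : ℝ} (hδ : 0 < δ) :
    ∃ r : X → ℝ, (∀ x, 0 < r x) ∧ Measurable r ∧ Integrable r μ ∧ ∫ x, r x ∂μ ≤ δ := by
  obtain ⟨g, hg0, hgm, hgδ⟩ :=
    exists_pos_lintegral_lt_of_sigmaFinite μ (ENNReal.ofReal_pos.mpr hδ).ne'
  have hgi : Integrable (fun x => (g x : ℝ)) μ :=
    ⟨hgm.coe_nnreal_real.aestronglyMeasurable, by
      simpa [HasFiniteIntegral] using hgδ.trans ENNReal.ofReal_lt_top⟩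
  refine ⟨fun x => g x, fun x => hg0 x, hgm.coe_nnreal_real, hgi, ?_⟩
  rw [lintegral_coe_eq_integral g hgi, ENNReal.ofReal_lt_ofReal_iff hδ] at hgδ
  exact hgδ.le

theorem measurableSet_norm_sub_le {γ : X → H} {d : ℕ → H} {c : H}
    (hγd : ∀ x, γ x - c ∈ closure (Set.range d)) (hγ : ∀ v, Measurable fun x => ⟪γ x, v⟫_𝕜)
    {r : X → ℝ} (hr : Measurable r) (hr0 : ∀ x, 0 ≤ r x) :
    MeasurableSet {x | ‖γ x - c‖ ≤ r x} := by
  have hset : {x | ‖γ x - c‖ ≤ r x} =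
      ⋂ j, {x | 2 * re ⟪γ x - c, d j⟫_𝕜 ≤ ‖d j‖ ^ 2 + r x ^ 2} := by
    ext x
    rw [Set.mem_iInter, Set.mem_ofPred_eq,
      norm_le_iff_forall_two_mul_re_inner_le (𝕜 := 𝕜) (hγd x) (hr0 x), Set.forall_mem_range]
    rfl
  rw [hset]
  refine MeasurableSet.iInter fun j => measurableSet_le ?_ (measurable_const.add (hr.pow_const 2))
  simp_rw [inner_sub_left, map_sub]
  exact ((reCLM.measurable.comp (hγ (d j))).sub_const _).const_mul 2

theorem exists_measurable_nat_norm_sub_le {γ : X → H} {K : Submodule 𝕜 H}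
    (hK : TopologicalSpace.IsSeparable (K : Set H)) (hγK : ∀ x, γ x ∈ K)
    (hγ : ∀ v, Measurable fun x => ⟪γ x, v⟫_𝕜) {r : X → ℝ} (hr : Measurable r)
    (hr0 : ∀ x, 0 < r x) :
    ∃ (d : ℕ → H) (n : X → ℕ), Measurable n ∧ ∀ x, ‖γ x - d (n x)‖ ≤ r x := by
  obtain ⟨t, htK, htc, hKt⟩ := hK.exists_countable_dense_subset
  obtain ⟨d, rfl⟩ := htc.exists_eq_range (closure_nonempty_iff.mp ⟨0, hKt K.zero_mem⟩)
  have hex : ∀ x, ∃ k, ‖γ x - d k‖ ≤ r x := fun x => by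
    obtain ⟨_, ⟨k, rfl⟩, hk⟩ := Metric.mem_closure_iff.mp (hKt (hγK x)) (r x) (hr0 x)
    exact ⟨k, ((dist_eq_norm _ _).symm.trans_lt hk).le⟩
  have hmeas : ∀ k, MeasurableSet {x | ‖γ x - d k‖ ≤ r x} := fun k =>
    measurableSet_norm_sub_le (fun x => hKt (K.sub_mem (hγK x) (htK ⟨k, rfl⟩))) hγ hr
      fun x => (hr0 x).le
  exact ⟨d, fun x => Nat.find (hex x), measurable_find hex hmeas, fun x => Nat.find_spec (hex x)⟩

theorem memLp_one_inner_of_norm_sub_le {γ γ' : X → H}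
    (hγ : ∀ v, MemLp (fun x => ⟪γ x, v⟫_𝕜) 1 μ)
    (hγ' : ∀ v, AEStronglyMeasurable (fun x => ⟪γ' x, v⟫_𝕜) μ) {r : X → ℝ} (hr : Integrable r μ)
    (hγr : ∀ x, ‖γ x - γ' x‖ ≤ r x) (v : H) : MemLp (fun x => ⟪γ' x, v⟫_𝕜) 1 μ := by
  have hdiff : Integrable (fun x => ⟪γ x - γ' x, v⟫_𝕜) μ := by
    refine (hr.mul_const ‖v‖).mono' ?_ (Eventually.of_forall fun x => ?_)
    · simp_rw [inner_sub_left]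
      exact (hγ v).1.sub (hγ' v)
    · exact (norm_inner_le_norm _ _).trans (mul_le_mul_of_nonneg_right (hγr x) (norm_nonneg v))
  rw [memLp_one_iff_integrable]
  refine ((memLp_one_iff_integrable.mp (hγ v)).sub hdiff).congr (Eventually.of_forall fun x => ?_)
  simp only [Pi.sub_apply, inner_sub_left, sub_sub_cancel]

variable {p : ℝ≥0∞} [Fact (1 ≤ p)]

theorem Lp.eq_of_tendsto_of_ae_eq_continuous {E F : Type*} [TopologicalSpace E]
    [NormedAddCommGroup F] {L : E → Lp F p μ} {f : E → X → F} (hf : ∀ x, Continuous (f · x))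
    (hL : ∀ v, L v =ᵐ[μ] f v) {u : ℕ → E} {v : E} {g : Lp F p μ}
    (hu : Tendsto u atTop (𝓝 v)) (hLu : Tendsto (L ∘ u) atTop (𝓝 g)) : g = L v := by
  obtain ⟨ns, hns, hae⟩ := (tendstoInMeasure_of_tendsto_Lp hLu).exists_seq_tendsto_ae
  refine Lp.ext ?_
  filter_upwards [hae, ae_all_iff.mpr fun k => hL (u (ns k)), hL v] with x hx hLx hvx
  rw [hvx]
  refine tendsto_nhds_unique hx ?_
  simp only [Function.comp_apply, hLx]
  exact ((hf x).tendsto v).comp (hu.comp hns.tendsto_atTop)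

noncomputable def innerToLpₗ (γ : X → H) (hγ : ∀ v, MemLp (fun x => ⟪γ x, v⟫_𝕜) p μ) :
    H →ₗ[𝕜] Lp 𝕜 p μ where
  toFun v := (hγ v).toLp
  map_add' v w := by
    rw [← MemLp.toLp_add]
    exact MemLp.toLp_congr _ _ (Eventually.of_forall fun x => inner_add_right _ _ _)
  map_smul' c v := by
    rw [RingHom.id_apply, ← MemLp.toLp_const_smul]
    exact MemLp.toLp_congr _ _ (Eventually.of_forall fun x => inner_smul_right _ _ _)

variable [CompleteSpace H]

noncomputable def innerToLp (γ : X → H) (hγ : ∀ v, MemLp (fun x => ⟪γ x, v⟫_𝕜) p μ) :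
    H →L[𝕜] Lp 𝕜 p μ :=
  .ofSeqClosedGraph fun _ _ _ hu hLu =>
    Lp.eq_of_tendsto_of_ae_eq_continuous (L := innerToLpₗ γ hγ)
      (fun _ => continuous_const.inner continuous_id) (fun v => (hγ v).coeFn_toLp) hu hLu

theorem coeFn_innerToLp (γ : X → H) (hγ : ∀ v, MemLp (fun x => ⟪γ x, v⟫_𝕜) p μ) (v : H) :
    innerToLp γ hγ v =ᵐ[μ] fun x => ⟪γ x, v⟫_𝕜 :=
  (hγ v).coeFn_toLp

theorem isCompactOperator_innerToLp_of_finite_range {γ : X → H}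
    (hγ : ∀ v, MemLp (fun x => ⟪γ x, v⟫_𝕜) p μ) (hfin : (Set.range γ).Finite) :
    IsCompactOperator (innerToLp γ hγ) := by
  set K := Submodule.span 𝕜 (Set.range γ)
  have : FiniteDimensional 𝕜 K := FiniteDimensional.span_of_finite 𝕜 hfin
  have hproj : innerToLp γ hγ =
      ((innerToLp γ hγ).comp K.subtypeL).comp K.orthogonalProjectionOnto := by
    refine ContinuousLinearMap.ext fun v => Lp.ext ?_
    filter_upwards [coeFn_innerToLp γ hγ v, coeFn_innerToLp γ hγ (K.orthogonalProjectionOnto v)]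
      with x hv hPv
    have hγK : γ x ∈ K := Submodule.subset_span ⟨x, rfl⟩
    simp only [ContinuousLinearMap.comp_apply, Submodule.subtypeL_apply, hv, hPv]
    exact (K.inner_orthogonalProjectionOnto_eq_of_mem_left ⟨γ x, hγK⟩ v).symm
  rw [hproj]
  exact ((isCompactOperator_id (E := K)).clm_comp ((innerToLp γ hγ).comp K.subtypeL)).comp_clm
    K.orthogonalProjectionOnto

theorem norm_innerToLp_one_apply (γ : X → H) (hγ : ∀ v, MemLp (fun x => ⟪γ x, v⟫_𝕜) 1 μ)
    (v : H) : ‖innerToLp γ hγ v‖ = ∫ x, ‖⟪γ x, v⟫_𝕜‖ ∂μ := by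
  rw [L1.norm_eq_integral_norm]
  exact integral_congr_ae ((coeFn_innerToLp γ hγ v).mono fun x hx => congrArg norm hx)

theorem norm_innerToLp_one_sub_apply (γ γ' : X → H) (hγ : ∀ v, MemLp (fun x => ⟪γ x, v⟫_𝕜) 1 μ)
    (hγ' : ∀ v, MemLp (fun x => ⟪γ' x, v⟫_𝕜) 1 μ) (v : H) :
    ‖(innerToLp γ hγ - innerToLp γ' hγ') v‖ = ∫ x, ‖⟪γ x - γ' x, v⟫_𝕜‖ ∂μ := by
  rw [L1.norm_eq_integral_norm]
  refine integral_congr_ae ?_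
  filter_upwards [Lp.coeFn_sub (innerToLp γ hγ v) (innerToLp γ' hγ' v), coeFn_innerToLp γ hγ v,
    coeFn_innerToLp γ' hγ' v] with x hx hγx hγ'x
  rw [_root_.sub_apply, hx, Pi.sub_apply, hγx, hγ'x, inner_sub_left]

theorem norm_innerToLp_one_sub_le {γ γ' : X → H} (hγ : ∀ v, MemLp (fun x => ⟪γ x, v⟫_𝕜) 1 μ)
    (hγ' : ∀ v, MemLp (fun x => ⟪γ' x, v⟫_𝕜) 1 μ) {r : X → ℝ} (hr : Integrable r μ)
    (hγr : ∀ x, ‖γ x - γ' x‖ ≤ r x) :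
    ‖innerToLp γ hγ - innerToLp γ' hγ'‖ ≤ ∫ x, r x ∂μ := by
  refine ContinuousLinearMap.opNorm_le_bound _
    (integral_nonneg fun x => (norm_nonneg _).trans (hγr x)) fun v => ?_
  rw [norm_innerToLp_one_sub_apply, ← integral_mul_const]
  refine integral_mono_of_nonneg (Eventually.of_forall fun x => norm_nonneg _)
    (hr.mul_const _) (Eventually.of_forall fun x => ?_)
  exact (norm_inner_le_norm _ _).trans (mul_le_mul_of_nonneg_right (hγr x) (norm_nonneg v))

theorem isCompactOperator_innerToLp_one_comp (d : ℕ → H) {n : X → ℕ} (hn : Measurable n)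
    (hd : ∀ v, MemLp (fun x => ⟪d (n x), v⟫_𝕜) 1 μ) :
    IsCompactOperator (innerToLp (fun x => d (n x)) hd) := by
  set T := innerToLp (fun x => d (n x)) hd
  set w : ℕ → H := fun k => (μ.real (n ⁻¹' {k}) : 𝕜) • d k
  have hw : ∀ k v, ‖⟪w k, v⟫_𝕜‖ = μ.real (n ⁻¹' {k}) * ‖⟪d k, v⟫_𝕜‖ := fun k v => by
    rw [inner_smul_left, conj_ofReal, norm_mul, norm_ofReal, abs_of_nonneg measureReal_nonneg]
  have hC : ∀ v M, ∑ k ∈ range M, ‖⟪w k, v⟫_𝕜‖ ≤ ‖T‖ * ‖v‖ := fun v M => by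
    simp_rw [hw]
    calc _ ≤ ∫ x, ‖⟪d (n x), v⟫_𝕜‖ ∂μ :=
          sum_le_hasSum _ (fun k _ => by positivity)
            (hasSum_integral_comp_of_countable hn (memLp_one_iff_integrable.mp (hd v)).norm)
      _ = ‖T v‖ := (norm_innerToLp_one_apply _ hd v).symm
      _ ≤ ‖T‖ * ‖v‖ := T.le_opNorm v
  refine T.isCompactOperator_of_forall_exists_norm_sub_le fun δ hδ => ?_
  obtain ⟨N, hN⟩ := exists_sum_Ico_norm_inner_le hC hδ
  set dN : ℕ → H := fun k => if k < N then d k else 0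
  have hdN : ∀ v, MemLp (fun x => ⟪dN (n x), v⟫_𝕜) 1 μ := fun v => by
    have : (fun x => ⟪dN (n x), v⟫_𝕜) = {x | n x < N}.indicator fun x => ⟪d (n x), v⟫_𝕜 := by
      funext x
      by_cases h : n x < N <;> simp [dN, h]
    rw [this]
    exact (hd v).indicator (measurableSet_lt hn measurable_const)
  have hfin : (Set.range fun x => dN (n x)).Finite := by
    refine (((Set.finite_Iio N).image d).insert 0).subset ?_
    rintro _ ⟨x, rfl⟩
    by_cases h : n x < N
    · exact Or.inr ⟨n x, h, by simp [dN, h]⟩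
    · exact Or.inl (by simp [dN, h])
  refine ⟨innerToLp _ hdN, isCompactOperator_innerToLp_of_finite_range hdN hfin,
    ContinuousLinearMap.opNorm_le_bound _ hδ.le fun v => ?_⟩
  have hterm : ∀ k, μ.real (n ⁻¹' {k}) * ‖⟪d k - dN k, v⟫_𝕜‖ =
      if N ≤ k then ‖⟪w k, v⟫_𝕜‖ else 0 := fun k => by
    by_cases hk : k < N
    · simp [dN, hk]
    · simp [dN, hk, hw, not_lt.mp hk]
  have hint : Integrable (fun x => ‖⟪d (n x) - dN (n x), v⟫_𝕜‖) μ := by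
    simp_rw [inner_sub_left]
    exact (memLp_one_iff_integrable.mp ((hd v).sub (hdN v))).norm
  rw [norm_innerToLp_one_sub_apply]
  refine le_of_tendsto' (hasSum_integral_comp_of_countable (g := fun k => ‖⟪d k - dN k, v⟫_𝕜‖)
    hn hint).tendsto_sum_nat fun M => ?_
  simp only [smul_eq_mul]
  rw [sum_congr rfl fun k _ => hterm k, ← sum_filter]
  have hIco : {k ∈ range M | N ≤ k} = Ico N M := by
    ext k
    rw [mem_filter, mem_range, mem_Ico, and_comm]
  rw [hIco]
  exact hN v M

end MeasureTheory

end

/-- if `(X,μ)` is σ-finite and `γ : X → H` is weakly integrable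
(`x ↦ ⟨v, γ x⟩ = ⟪γ x, v⟫_ℂ` is measurable and in `L¹(X,μ)` for all `v`) with
separable closed span, then the operator `A_γ : H → L¹(X,μ)`, `v ↦ ⟨v, γ(·)⟩`, is
compact. -/
theorem eval_operator_compact_L1 {X : Type*} [MeasurableSpace X]
    (μ : Measure X) [SigmaFinite μ] {H : Type*} [NormedAddCommGroup H]
    [InnerProductSpace ℂ H] [CompleteSpace H] (γ : X → H)
    (hsep : TopologicalSpace.IsSeparable
      (((Submodule.span ℂ (Set.range γ)).topologicalClosure : Submodule ℂ H) : Set H))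
    (hint : ∀ v : H, Measurable (fun x => ⟪γ x, v⟫_ℂ) ∧
      MemLp (fun x => ⟪γ x, v⟫_ℂ) 1 μ) :
    ∃ T : H →L[ℂ] Lp ℂ 1 μ,
      (∀ v : H, (T v : X → ℂ) =ᵐ[μ] fun x => ⟪γ x, v⟫_ℂ) ∧ IsCompactOperator T := by
  have hmem : ∀ v, MemLp (fun x => ⟪γ x, v⟫_ℂ) 1 μ := fun v => (hint v).2
  refine ⟨innerToLp γ hmem, coeFn_innerToLp γ hmem, ?_⟩
  refine (innerToLp γ hmem).isCompactOperator_of_forall_exists_norm_sub_le fun δ hδ => ?_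
  obtain ⟨r, hr0, hrm, hri, hrδ⟩ := exists_pos_integrable_integral_le μ hδ
  obtain ⟨d, n, hn, hdn⟩ := exists_measurable_nat_norm_sub_le hsep
    (fun x => Submodule.le_topologicalClosure _ (Submodule.subset_span ⟨x, rfl⟩))
    (fun v => (hint v).1) hrm hr0
  have hd : ∀ v, MemLp (fun x => ⟪d (n x), v⟫_ℂ) 1 μ :=
    memLp_one_inner_of_norm_sub_le hmem
      (fun v => ((measurable_from_nat (f := fun k => ⟪d k, v⟫_ℂ)).comp hn).aestronglyMeasurable)
      hri hdn
  exact ⟨innerToLp _ hd, isCompactOperator_innerToLp_one_comp d hn hd,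
    (norm_innerToLp_one_sub_le hmem hd hri hdn).trans hrδ⟩
end

section
/- Let γ : X → H be strongly p-integrable, i.e., measurable with ∫_X ‖γ(x)‖^p dμ(x) < ∞, where 1 ≤ p < ∞. Then A_γ : H → L^p(X,μ), v ↦ ⟨v, γ(·)⟩, is a compact operator. -/
/-!
Pointwise Cauchy–Schwarz gives `‖A_f‖ ≤ ‖f‖_p`, and `f ↦ A_f` is additive, so `A_f` depends
continuously on `f ∈ L^p`. For a simple function `s`, `A_s` only sees the orthogonal projection
onto the finite-dimensional span of the values of `s`, hence is compact. Since `p < ∞`, simple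
functions are dense in `L^p`, and compact operators form a closed set.
-/

open MeasureTheory Filter
open scoped InnerProductSpace ENNReal

section

variable {X : Type*} [MeasurableSpace X] {μ : Measure X} {𝕜 H : Type*} [RCLike 𝕜]
  [NormedAddCommGroup H] [InnerProductSpace 𝕜 H] {p : ℝ≥0∞} {f g : X → H}

theorem MeasureTheory.eLpNorm_inner_const_le (v : H) :
    eLpNorm (fun x => ⟪f x, v⟫_𝕜) p μ ≤ ENNReal.ofReal ‖v‖ * eLpNorm f p μ :=
  eLpNorm_le_mul_eLpNorm_of_ae_le_mul
    (Eventually.of_forall fun _ => (norm_inner_le_norm _ _).trans_eq (mul_comm _ _)) p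

namespace MeasureTheory.MemLp

variable [Fact (1 ≤ p)]

/-- The operator `A_f : v ↦ ⟪f ·, v⟫`. -/
noncomputable def innerLpL (hf : MemLp f p μ) : H →L[𝕜] Lp 𝕜 p μ :=
  LinearMap.mkContinuous
    { toFun v := (hf.inner_const v).toLp _
      map_add' v w := by
        rw [← toLp_add]
        exact toLp_congr _ _ (Eventually.of_forall fun x => inner_add_right _ _ _)
      map_smul' c v := by
        rw [RingHom.id_apply, ← toLp_const_smul]
        exact toLp_congr _ _ (Eventually.of_forall fun x => inner_smul_right _ _ _) }
    (eLpNorm f p μ).toReal fun v => by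
      simp only [LinearMap.coe_mk, AddHom.coe_mk, Lp.norm_toLp]
      calc (eLpNorm (fun x => ⟪f x, v⟫_𝕜) p μ).toReal
          ≤ (ENNReal.ofReal ‖v‖ * eLpNorm f p μ).toReal :=
            ENNReal.toReal_mono (ENNReal.mul_ne_top ENNReal.ofReal_ne_top hf.2.ne)
              (eLpNorm_inner_const_le v)
        _ = (eLpNorm f p μ).toReal * ‖v‖ := by
            rw [ENNReal.toReal_mul, ENNReal.toReal_ofReal (norm_nonneg v), mul_comm]

theorem innerLpL_apply (hf : MemLp f p μ) (v : H) :
    hf.innerLpL v = (hf.inner_const (𝕜 := 𝕜) v).toLp _ := rfl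

theorem coeFn_innerLpL (hf : MemLp f p μ) (v : H) :
    hf.innerLpL v =ᵐ[μ] fun x => ⟪f x, v⟫_𝕜 :=
  coeFn_toLp (hf.inner_const v)

theorem norm_innerLpL_le (hf : MemLp f p μ) :
    ‖(hf.innerLpL : H →L[𝕜] Lp 𝕜 p μ)‖ ≤ (eLpNorm f p μ).toReal :=
  LinearMap.mkContinuous_norm_le _ ENNReal.toReal_nonneg _

theorem innerLpL_sub (hf : MemLp f p μ) (hg : MemLp g p μ) :
    (hf.innerLpL : H →L[𝕜] Lp 𝕜 p μ) - hg.innerLpL = (hf.sub hg).innerLpL := by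
  ext1 v
  rw [sub_apply, innerLpL_apply, innerLpL_apply, innerLpL_apply, ← toLp_sub]
  exact toLp_congr _ _ (Eventually.of_forall fun x => (inner_sub_left _ _ _).symm)

theorem isCompactOperator_innerLpL_of_ae_mem (hf : MemLp f p μ) (W : Submodule 𝕜 H)
    [FiniteDimensional 𝕜 W] (hW : ∀ᵐ x ∂μ, f x ∈ W) :
    IsCompactOperator (hf.innerLpL : H →L[𝕜] Lp 𝕜 p μ) := by
  have hproj : (hf.innerLpL.comp W.subtypeL).comp W.orthogonalProjectionOnto = hf.innerLpL := by
    ext1 v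
    refine toLp_congr (hf.inner_const _) (hf.inner_const v) (hW.mono fun x hx => ?_)
    exact W.inner_orthogonalProjectionOnto_eq_of_mem_left ⟨f x, hx⟩ v
  rw [← hproj]
  exact (isCompactOperator_of_locallyCompactSpace_rng (hf.innerLpL.comp W.subtypeL)).comp_clm
    W.orthogonalProjectionOnto

theorem isCompactOperator_innerLpL (hp : p ≠ ∞) (hf : MemLp f p μ) :
    IsCompactOperator (hf.innerLpL : H →L[𝕜] Lp 𝕜 p μ) := by
  refine isClosed_setOfPred_isCompactOperator.closure_subset
    (Metric.mem_closure_iff.2 fun ε hε => ?_)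
  obtain ⟨s, hfs, hs⟩ := hf.exists_simpleFunc_eLpNorm_sub_lt hp (ENNReal.ofReal_pos.2 hε).ne'
  refine ⟨hs.innerLpL, hs.isCompactOperator_innerLpL_of_ae_mem
    (Submodule.span 𝕜 (s.range : Set H)) (Eventually.of_forall fun x => ?_), ?_⟩
  · exact Submodule.subset_span (s.mem_range_self x)
  · rw [dist_eq_norm, innerLpL_sub]
    exact (norm_innerLpL_le _).trans_lt (ENNReal.toReal_lt_of_lt_ofReal hfs)

end MeasureTheory.MemLp

end

theorem eval_operator_compact_of_stronglyIntegrable_general {X : Type*} [MeasurableSpace X]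
    (μ : Measure X) {H : Type*} [NormedAddCommGroup H]
    [InnerProductSpace ℂ H]
    (γ : X → H) (p : ℝ≥0∞) [Fact (1 ≤ p)] (hp' : p ≠ ∞)
    (hγ : MemLp γ p μ) :
    ∃ T : H →L[ℂ] Lp ℂ p μ,
      (∀ v : H, (T v : X → ℂ) =ᵐ[μ] fun x => ⟪γ x, v⟫_ℂ) ∧ IsCompactOperator T :=
  ⟨hγ.innerLpL, hγ.coeFn_innerLpL, hγ.isCompactOperator_innerLpL hp'⟩

/-- if `γ : X → H` is strongly `p`-integrable (`1 ≤ p < ∞`), i.e.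
(strongly a.e.) measurable with `∫ ‖γ x‖^p dμ < ∞` — in Mathlib: `Memℒp γ p μ` —
then the operator `A_γ : H → L^p(X,μ)`, `v ↦ ⟨v, γ(·)⟩ = ⟪γ ·, v⟫_ℂ`, is compact. -/
theorem eval_operator_compact_of_stronglyIntegrable {X : Type*} [MeasurableSpace X]
    (μ : Measure X) [SigmaFinite μ] {H : Type*} [NormedAddCommGroup H]
    [InnerProductSpace ℂ H] [CompleteSpace H] [TopologicalSpace.SeparableSpace H]
    (γ : X → H) (p : ℝ≥0∞) [Fact (1 ≤ p)] (hp' : p ≠ ∞)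
    (hγ : MemLp γ p μ) :
    ∃ T : H →L[ℂ] Lp ℂ p μ,
      (∀ v : H, (T v : X → ℂ) =ᵐ[μ] fun x => ⟪γ x, v⟫_ℂ) ∧ IsCompactOperator T :=
  eval_operator_compact_of_stronglyIntegrable_general μ γ p hp' hγ
end

section
/- Let γ : X → H be weakly square-integrable with separable span. Then the integral operator L_Γ on L²(X,μ) with kernel Γ(x,t) = ⟨γ(t), γ(x)⟩ is trace class if and only if ∫_X Γ(x,x) dμ(x) < ∞. -/
/-!
Let `A : H → L²(μ)`, `A v = ⟪γ ·, v⟫`, be the analysis operator of `γ`; it is bounded by the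
closed graph theorem, and the kernel hypothesis says `T = A A*`, so `⟪bᵢ, T bᵢ⟫ = ‖A* bᵢ‖²`.
For a Hilbert basis `(eⱼ)` of the closed span of `γ`, Parseval twice gives
`∑ᵢ ‖A* bᵢ‖² = ∑ⱼ ‖A eⱼ‖² = ∑ⱼ ∫ |⟪γ x, eⱼ⟫|² dμ`. Separability makes `(eⱼ)` countable, so sum
and integral commute, and Parseval in the span turns the integrand into `‖γ x‖²`.
-/

open MeasureTheory Filter
open scoped InnerProductSpace ENNReal Topology

section HilbertSpace

variable {𝕜 E F ι κ : Type*} [RCLike 𝕜] [NormedAddCommGroup E] [InnerProductSpace 𝕜 E]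
  [NormedAddCommGroup F] [InnerProductSpace 𝕜 F]

theorem Orthonormal.countable [TopologicalSpace.SeparableSpace E] {v : ι → E}
    (hv : Orthonormal 𝕜 v) : Countable ι := by
  refine Pairwise.countable_of_isOpen_disjoint (s := fun i => Metric.ball (v i) (1 / 2))
    (fun i j hij => Metric.ball_disjoint_ball ?_) (fun _ => Metric.isOpen_ball)
    (fun i => ⟨v i, Metric.mem_ball_self one_half_pos⟩)
  have : ‖v i - v j‖ ^ 2 = 2 := by
    rw [@norm_sub_sq 𝕜, hv.1 i, hv.1 j, hv.2 hij]; norm_num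
  rw [dist_eq_norm]
  nlinarith [norm_nonneg (v i - v j)]

theorem HilbertBasis.tsum_enorm_inner_sq (b : HilbertBasis ι 𝕜 E) (u : E) :
    ∑' i, ‖⟪b i, u⟫_𝕜‖ₑ ^ 2 = ‖u‖ₑ ^ 2 := by
  have h := lp.hasSum_norm (p := 2) (by norm_num) (b.repr u)
  simp only [b.repr_apply_apply, b.repr.norm_map, ENNReal.toReal_ofNat, Real.rpow_two] at h
  simp only [← ofReal_norm, ← ENNReal.ofReal_pow (norm_nonneg _)]
  rw [← ENNReal.ofReal_tsum_of_nonneg (fun _ => by positivity) h.summable, h.tsum_eq]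

theorem ContinuousLinearMap.tsum_enorm_adjoint_apply_sq [CompleteSpace E] [CompleteSpace F]
    (A : E →L[𝕜] F) (e : HilbertBasis κ 𝕜 E) (b : HilbertBasis ι 𝕜 F) :
    ∑' i, ‖A.adjoint (b i)‖ₑ ^ 2 = ∑' j, ‖A (e j)‖ₑ ^ 2 := calc
  _ = ∑' i, ∑' j, ‖⟪b i, A (e j)⟫_𝕜‖ₑ ^ 2 := by
    refine tsum_congr fun i => ?_
    rw [← e.tsum_enorm_inner_sq]
    refine tsum_congr fun j => ?_
    rw [adjoint_inner_right, ← inner_conj_symm, RCLike.enorm_conj]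
  _ = ∑' j, ‖A (e j)‖ₑ ^ 2 := by
    rw [ENNReal.tsum_comm]
    simp_rw [b.tsum_enorm_inner_sq]

theorem ContinuousLinearMap.enorm_inner_apply_adjoint_apply [CompleteSpace E] [CompleteSpace F]
    (A : E →L[𝕜] F) (y : F) : ‖⟪y, A (A.adjoint y)⟫_𝕜‖ₑ = ‖A.adjoint y‖ₑ ^ 2 := by
  rw [← adjoint_inner_left, inner_self_eq_norm_sq_to_K]
  simp [← ofReal_norm]

end HilbertSpace

theorem MeasureTheory.Lp.enorm_sq_eq_lintegral {X E : Type*} [MeasurableSpace X] {μ : Measure X}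
    [NormedAddCommGroup E] (f : Lp E 2 μ) : ‖f‖ₑ ^ 2 = ∫⁻ x, ‖f x‖ₑ ^ 2 ∂μ := by
  have h := eLpNorm_nnreal_pow_eq_lintegral (f := f) (μ := μ) (p := 2) two_ne_zero
  simpa [Lp.enorm_def] using h

namespace MeasureTheory

variable {X 𝕜 H : Type*} [MeasurableSpace X] {μ : Measure X} [RCLike 𝕜] [NormedAddCommGroup H]
  [InnerProductSpace 𝕜 H] {γ : X → H}

noncomputable def analysisLinearMap (hγ : ∀ v, MemLp (fun x => ⟪γ x, v⟫_𝕜) 2 μ) :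
    H →ₗ[𝕜] Lp 𝕜 2 μ where
  toFun v := (hγ v).toLp
  map_add' v w := by
    rw [← MemLp.toLp_add]
    exact MemLp.toLp_congr _ _ (ae_of_all _ fun x => inner_add_right _ _ _)
  map_smul' c v := by
    rw [RingHom.id_apply, ← MemLp.toLp_const_smul]
    exact MemLp.toLp_congr _ _ (ae_of_all _ fun x => inner_smul_right _ _ _)

theorem analysisLinearMap_apply_ae (hγ : ∀ v, MemLp (fun x => ⟪γ x, v⟫_𝕜) 2 μ) (v : H) :
    analysisLinearMap hγ v =ᵐ[μ] fun x => ⟪γ x, v⟫_𝕜 :=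
  (hγ v).coeFn_toLp

theorem analysisLinearMap_eq_of_tendsto (hγ : ∀ v, MemLp (fun x => ⟪γ x, v⟫_𝕜) 2 μ)
    {u : ℕ → H} {v : H} {f : Lp 𝕜 2 μ} (hu : Tendsto u atTop (𝓝 v))
    (hf : Tendsto (analysisLinearMap hγ ∘ u) atTop (𝓝 f)) : f = analysisLinearMap hγ v := by
  obtain ⟨ns, hns, hae⟩ := (tendstoInMeasure_of_tendsto_Lp hf).exists_seq_tendsto_ae
  have hcoe := ae_all_iff.2 fun n => analysisLinearMap_apply_ae hγ (u n)
  refine Lp.ext ?_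
  filter_upwards [hae, hcoe, analysisLinearMap_apply_ae hγ v] with x hfx hux hvx
  rw [hvx]
  refine tendsto_nhds_unique ?_ ((tendsto_const_nhds.inner hu).comp hns.tendsto_atTop)
  simpa only [Function.comp_def, hux] using hfx

variable [CompleteSpace H]

noncomputable def analysisOperator (hγ : ∀ v, MemLp (fun x => ⟪γ x, v⟫_𝕜) 2 μ) :
    H →L[𝕜] Lp 𝕜 2 μ :=
  .ofSeqClosedGraph fun _ _ _ => analysisLinearMap_eq_of_tendsto hγ

section

variable (hγ : ∀ v, MemLp (fun x => ⟪γ x, v⟫_𝕜) 2 μ)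

theorem analysisOperator_apply_ae (v : H) :
    analysisOperator hγ v =ᵐ[μ] fun x => ⟪γ x, v⟫_𝕜 :=
  analysisLinearMap_apply_ae hγ v

theorem enorm_analysisOperator_sq (v : H) :
    ‖analysisOperator hγ v‖ₑ ^ 2 = ∫⁻ x, ‖⟪γ x, v⟫_𝕜‖ₑ ^ 2 ∂μ := by
  rw [Lp.enorm_sq_eq_lintegral]
  refine lintegral_congr_ae ?_
  filter_upwards [analysisOperator_apply_ae hγ v] with x hx
  rw [hx]

theorem inner_adjoint_analysisOperator (φ : Lp 𝕜 2 μ) (x : X) :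
    ⟪γ x, (analysisOperator hγ).adjoint φ⟫_𝕜 = ∫ t, ⟪γ x, γ t⟫_𝕜 * φ t ∂μ := by
  rw [← inner_conj_symm, ContinuousLinearMap.adjoint_inner_left, L2.inner_def, ← integral_conj]
  refine integral_congr_ae ?_
  filter_upwards [analysisOperator_apply_ae hγ (γ x)] with t ht
  rw [ht, RCLike.inner_apply, map_mul, RCLike.conj_conj, inner_conj_symm, mul_comm]

theorem eq_analysisOperator_comp_adjoint (T : Lp 𝕜 2 μ →L[𝕜] Lp 𝕜 2 μ)
    (hT : ∀ φ : Lp 𝕜 2 μ, T φ =ᵐ[μ] fun x => ∫ t, ⟪γ x, γ t⟫_𝕜 * φ t ∂μ) :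
    T = analysisOperator hγ ∘L (analysisOperator hγ).adjoint := by
  ext1 φ
  refine Lp.ext ((hT φ).trans ?_)
  filter_upwards [analysisOperator_apply_ae hγ ((analysisOperator hγ).adjoint φ)] with x hx
  rw [ContinuousLinearMap.comp_apply, hx, inner_adjoint_analysisOperator]

end

theorem tsum_enorm_inner_apply_eq_lintegral [TopologicalSpace.SeparableSpace H] {ι : Type*}
    (hγ : ∀ v, MemLp (fun x => ⟪γ x, v⟫_𝕜) 2 μ)
    (T : Lp 𝕜 2 μ →L[𝕜] Lp 𝕜 2 μ)
    (hT : ∀ φ : Lp 𝕜 2 μ, T φ =ᵐ[μ] fun x => ∫ t, ⟪γ x, γ t⟫_𝕜 * φ t ∂μ)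
    (b : HilbertBasis ι 𝕜 (Lp 𝕜 2 μ)) :
    ∑' i, ‖⟪b i, T (b i)⟫_𝕜‖ₑ = ∫⁻ x, ‖γ x‖ₑ ^ 2 ∂μ := by
  obtain ⟨w, e, -⟩ := exists_hilbertBasis 𝕜 H
  have : Countable w := e.orthonormal.countable
  have hmeas : ∀ j, AEMeasurable (fun x => ‖⟪γ x, e j⟫_𝕜‖ₑ ^ 2) μ := fun j =>
    ((hγ (e j)).aestronglyMeasurable.enorm).pow_const 2
  calc ∑' i, ‖⟪b i, T (b i)⟫_𝕜‖ₑ = ∑' i, ‖(analysisOperator hγ).adjoint (b i)‖ₑ ^ 2 := by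
        simp_rw [eq_analysisOperator_comp_adjoint hγ T hT, ContinuousLinearMap.comp_apply,
          ContinuousLinearMap.enorm_inner_apply_adjoint_apply]
    _ = ∑' j, ‖analysisOperator hγ (e j)‖ₑ ^ 2 :=
        (analysisOperator hγ).tsum_enorm_adjoint_apply_sq e b
    _ = ∫⁻ x, ∑' j, ‖⟪e j, γ x⟫_𝕜‖ₑ ^ 2 ∂μ := by
        simp_rw [enorm_analysisOperator_sq, ← lintegral_tsum hmeas, ← inner_conj_symm (γ _),
          RCLike.enorm_conj]
    _ = ∫⁻ x, ‖γ x‖ₑ ^ 2 ∂μ := by simp_rw [e.tsum_enorm_inner_sq]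

end MeasureTheory

theorem integral_operator_traceClass_iff_general {X : Type*} [MeasurableSpace X]
    (μ : Measure X) {H : Type*} [NormedAddCommGroup H]
    [InnerProductSpace ℂ H] [CompleteSpace H] (γ : X → H)
    (hsep : TopologicalSpace.IsSeparable
      (((Submodule.span ℂ (Set.range γ)).topologicalClosure : Submodule ℂ H) : Set H))
    (hint : ∀ v : H, Measurable (fun x => ⟪γ x, v⟫_ℂ) ∧
      MemLp (fun x => ⟪γ x, v⟫_ℂ) 2 μ)
    (T : Lp ℂ 2 μ →L[ℂ] Lp ℂ 2 μ)
    (hT : ∀ φ : Lp ℂ 2 μ,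
      (T φ : X → ℂ) =ᵐ[μ] fun x => ∫ t, ⟪γ x, γ t⟫_ℂ * (φ : X → ℂ) t ∂μ)
    {ι : Type*} (b : HilbertBasis ι ℂ (Lp ℂ 2 μ)) :
    ∑' i : ι, (‖⟪b i, T (b i)⟫_ℂ‖₊ : ℝ≥0∞) < ⊤ ↔
      ∫⁻ x, (‖γ x‖₊ : ℝ≥0∞) ^ 2 ∂μ < ⊤ := by
  set K := (Submodule.span ℂ (Set.range γ)).topologicalClosure
  have : CompleteSpace K := (Submodule.isClosed_topologicalClosure _).completeSpace_coe
  have : TopologicalSpace.SeparableSpace K := hsep.separableSpace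
  -- inner products and norms in `K` are those of `H`, so the hypotheses transfer to `γK` verbatim
  let γK : X → K := fun x =>
    ⟨γ x, Submodule.le_topologicalClosure _ (Submodule.subset_span ⟨x, rfl⟩)⟩
  have key : ∑' i, ‖⟪b i, T (b i)⟫_ℂ‖ₑ = ∫⁻ x, ‖γ x‖ₑ ^ 2 ∂μ :=
    tsum_enorm_inner_apply_eq_lintegral (γ := γK) (fun v => (hint v).2) T hT b
  simp only [← enorm_eq_nnnorm, key]

/-- let `γ : X → H` be weakly square-integrable with separable closed
span and let `T = L_Γ = A_γ A_γ*` be the (positive bounded) integral operator on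
`L²(X,μ)` with kernel `Γ(x,t) = ⟨γ t, γ x⟩ = ⟪γ x, γ t⟫_ℂ`.  Then `L_Γ` is trace
class if and only if `∫ Γ(x,x) dμ(x) = ∫ ‖γ x‖² dμ(x) < ∞`; for the positive
operator `L_Γ` being trace class is expressed by the finiteness of the diagonal sum
`∑ᵢ ⟨L_Γ bᵢ, bᵢ⟩` along any Hilbert basis `(b i)` of `L²(X,μ)`. -/
theorem integral_operator_traceClass_iff {X : Type*} [MeasurableSpace X]
    (μ : Measure X) [SigmaFinite μ] {H : Type*} [NormedAddCommGroup H]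
    [InnerProductSpace ℂ H] [CompleteSpace H] (γ : X → H)
    (hsep : TopologicalSpace.IsSeparable
      (((Submodule.span ℂ (Set.range γ)).topologicalClosure : Submodule ℂ H) : Set H))
    (hint : ∀ v : H, Measurable (fun x => ⟪γ x, v⟫_ℂ) ∧
      MemLp (fun x => ⟪γ x, v⟫_ℂ) 2 μ)
    (T : Lp ℂ 2 μ →L[ℂ] Lp ℂ 2 μ)
    (hT : ∀ φ : Lp ℂ 2 μ,
      (T φ : X → ℂ) =ᵐ[μ] fun x => ∫ t, ⟪γ x, γ t⟫_ℂ * (φ : X → ℂ) t ∂μ)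
    {ι : Type*} (b : HilbertBasis ι ℂ (Lp ℂ 2 μ)) :
    ∑' i : ι, (‖⟪b i, T (b i)⟫_ℂ‖₊ : ℝ≥0∞) < ⊤ ↔
      ∫⁻ x, (‖γ x‖₊ : ℝ≥0∞) ^ 2 ∂μ < ⊤ :=
  integral_operator_traceClass_iff_general μ γ hsep hint T hT b
end
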